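/- arXiv:2404.04931 — 5 statements merged into one kernel-verified Lean document; each statement's English description precedes it below -/
import Mathlib

section
/- Let J be a finite index set, L ≥ 0, and let G = {(f_j, g_j, w_j)}_{j∈J} ⊆ ℝ × ℝ^d × ℝ^d be a family of triplets with ‖g_j‖ ≤ L for all j, satisfying f_i ≥ f_j + g_j·(w_i − w_j) for all i, j ∈ J. Define I_diff = {i ∈ J : for every j ∈ J, f_i = f_j + g_j·(w_i − w_j) implies g_i = g_j}. Then there exists a convex, L-Lipschitz function f̂ : ℝ^d → ℝ such that f̂(w_j) = f_j for every j ∈ J, and for every i ∈ I_diff, f̂ is differentiable at w_i with ∇f̂(w_i) = g_i. -/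
/-!
The interpolant is the maximum of the affine minorants `x ↦ f j + ⟪g j, x - w j⟫`: a maximum
of affine functions with slopes of norm at most `L` is convex and `L`-Lipschitz, and the
hypothesised inequalities say exactly that the `j`-th piece is active at `w j`. Near `w i` the
pieces inactive at `w i` stay strictly below the `i`-th one by continuity, while for
`i ∈ I_diff` every active piece has slope `g i` and so coincides with the `i`-th piece; hence
the maximum is locally affine there.
-/

open scoped RealInnerProductSpace BigOperators

open Filter Topology NNReal

theorem ConvexOn.finset_sup' {𝕜 E β ι : Type*} [Semiring 𝕜] [PartialOrder 𝕜] [AddCommMonoid E]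
    [LinearOrder β] [AddCommMonoid β] [IsOrderedAddMonoid β] [SMul 𝕜 E] [Module 𝕜 β]
    [PosSMulStrictMono 𝕜 β] {s : Set E} {t : Finset ι} (ht : t.Nonempty) {f : ι → E → β}
    (hf : ∀ i ∈ t, ConvexOn 𝕜 s (f i)) : ConvexOn 𝕜 s (t.sup' ht f) :=
  Finset.sup'_induction ht f (fun _ h₁ _ h₂ => h₁.sup h₂) hf

theorem LipschitzWith.finset_sup' {α ι : Type*} [PseudoEMetricSpace α] {K : ℝ≥0}
    {t : Finset ι} (ht : t.Nonempty) {f : ι → α → ℝ}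
    (hf : ∀ i ∈ t, LipschitzWith K (f i)) : LipschitzWith K (t.sup' ht f) :=
  Finset.sup'_induction ht f (fun _ h₁ _ h₂ => max_self K ▸ h₁.max h₂) hf

variable {E : Type*} [NormedAddCommGroup E] [InnerProductSpace ℝ E]

def tangentAffine (a : ℝ) (g w : E) (x : E) : ℝ := a + ⟪g, x - w⟫

theorem tangentAffine_self (a : ℝ) (g w : E) : tangentAffine a g w w = a := by
  simp [tangentAffine]

theorem tangentAffine_recenter (a : ℝ) (g w v : E) :
    tangentAffine a g w = tangentAffine (tangentAffine a g w v) g v := by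
  ext x
  simp only [tangentAffine, inner_sub_right]
  ring

theorem tangentAffine_eq_add_inner (a : ℝ) (g w : E) :
    tangentAffine a g w = fun x => ⟪g, x⟫ + (a - ⟪g, w⟫) := by
  ext x
  simp only [tangentAffine, inner_sub_right]
  ring

theorem continuous_tangentAffine (a : ℝ) (g w : E) : Continuous (tangentAffine a g w) := by
  unfold tangentAffine; fun_prop

theorem convexOn_tangentAffine (a : ℝ) (g w : E) : ConvexOn ℝ Set.univ (tangentAffine a g w) := by
  rw [tangentAffine_eq_add_inner]
  exact ((innerₗ E g).convexOn convex_univ).add_const _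

theorem lipschitzWith_tangentAffine (a : ℝ) (g w : E) :
    LipschitzWith ‖g‖₊ (tangentAffine a g w) :=
  LipschitzWith.of_dist_le_mul fun x y => by
    simpa [tangentAffine, Real.dist_eq, dist_eq_norm, ← inner_sub_right]
      using abs_real_inner_le_norm g (x - y)

theorem hasGradientAt_tangentAffine [CompleteSpace E] (a : ℝ) (g w x : E) :
    HasGradientAt (tangentAffine a g w) g x := by
  rw [tangentAffine_eq_add_inner, hasGradientAt_iff_hasFDerivAt]
  exact ((innerSL ℝ g).hasFDerivAt).add_const _

section maxAffine

variable {ι : Type*} [Fintype ι] [Nonempty ι] (a : ι → ℝ) (g w : ι → E)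

noncomputable def maxAffine : E → ℝ :=
  Finset.univ.sup' Finset.univ_nonempty fun j => tangentAffine (a j) (g j) (w j)

theorem tangentAffine_le_maxAffine (j : ι) (x : E) :
    tangentAffine (a j) (g j) (w j) x ≤ maxAffine a g w x := by
  rw [maxAffine, Finset.sup'_apply]
  exact Finset.le_sup' (fun j => tangentAffine (a j) (g j) (w j) x) (Finset.mem_univ j)

theorem maxAffine_le {x : E} {c : ℝ} (h : ∀ j, tangentAffine (a j) (g j) (w j) x ≤ c) :
    maxAffine a g w x ≤ c := by
  rw [maxAffine, Finset.sup'_apply]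
  exact Finset.sup'_le _ _ fun j _ => h j

theorem convexOn_maxAffine : ConvexOn ℝ Set.univ (maxAffine a g w) :=
  ConvexOn.finset_sup' _ fun j _ => convexOn_tangentAffine (a j) (g j) (w j)

theorem lipschitzWith_maxAffine {K : ℝ≥0} (hK : ∀ j, ‖g j‖ ≤ K) :
    LipschitzWith K (maxAffine a g w) :=
  LipschitzWith.finset_sup' _ fun j _ =>
    (lipschitzWith_tangentAffine (a j) (g j) (w j)).weaken (hK j)

variable {a g w}

theorem maxAffine_apply_eq {i : ι} (h : ∀ j, tangentAffine (a j) (g j) (w j) (w i) ≤ a i) :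
    maxAffine a g w (w i) = a i :=
  le_antisymm (maxAffine_le a g w h)
    (by simpa [tangentAffine_self] using tangentAffine_le_maxAffine a g w i (w i))

theorem maxAffine_eventuallyEq {i : ι} (h : ∀ j, tangentAffine (a j) (g j) (w j) (w i) ≤ a i)
    (hactive : ∀ j, a i = tangentAffine (a j) (g j) (w j) (w i) → g i = g j) :
    maxAffine a g w =ᶠ[𝓝 (w i)] tangentAffine (a i) (g i) (w i) := by
  have hdom : ∀ j, ∀ᶠ x in 𝓝 (w i),
      tangentAffine (a j) (g j) (w j) x ≤ tangentAffine (a i) (g i) (w i) x := by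
    intro j
    rcases (h j).lt_or_eq with hlt | heq
    · rw [← tangentAffine_self (a i) (g i) (w i)] at hlt
      exact ((continuous_tangentAffine _ _ _).continuousAt.eventually_lt
        (continuous_tangentAffine _ _ _).continuousAt hlt).mono fun _ => le_of_lt
    · refine Eventually.of_forall fun x => le_of_eq ?_
      rw [tangentAffine_recenter (a j) (g j) (w j) (w i), heq, hactive j heq.symm]
  filter_upwards [eventually_all.2 hdom] with x hx
  exact le_antisymm (maxAffine_le a g w hx) (tangentAffine_le_maxAffine a g w i x)

theorem hasGradientAt_maxAffine [CompleteSpace E] {i : ι}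
    (h : ∀ j, tangentAffine (a j) (g j) (w j) (w i) ≤ a i)
    (hactive : ∀ j, a i = tangentAffine (a j) (g j) (w j) (w i) → g i = g j) :
    HasGradientAt (maxAffine a g w) (g i) (w i) :=
  (hasGradientAt_tangentAffine _ _ _ _).congr_of_eventuallyEq (maxAffine_eventuallyEq h hactive)

end maxAffine

/-- **interpolation lemma.** Given finitely many triplets `(f_j, g_j, w_j)` with
`‖g_j‖ ≤ L` satisfying `f_i ≥ f_j + ⟪g_j, w_i − w_j⟫` for all `i, j`, there is a convex,
`L`-Lipschitz function `f̂ : ℝ^d → ℝ` with `f̂(w_j) = f_j` for all `j`, which is moreover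
differentiable with gradient `g_i` at every `w_i` with `i ∈ I_diff`, where
`I_diff = {i : ∀ j, f_i = f_j + ⟪g_j, w_i − w_j⟫ → g_i = g_j}`. -/
theorem convex_lipschitz_interpolation {d : ℕ} {J : Type} [Fintype J]
    (L : ℝ) (hL : 0 ≤ L) (f : J → ℝ) (g w : J → EuclideanSpace ℝ (Fin d))
    (hbound : ∀ j, ‖g j‖ ≤ L)
    (hineq : ∀ i j, f i ≥ f j + ⟪g j, w i - w j⟫) :
    ∃ fhat : EuclideanSpace ℝ (Fin d) → ℝ,
      ConvexOn ℝ Set.univ fhat ∧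
      (∀ u v, |fhat u - fhat v| ≤ L * ‖u - v‖) ∧
      (∀ j, fhat (w j) = f j) ∧
      (∀ i, (∀ j, f i = f j + ⟪g j, w i - w j⟫ → g i = g j) →
        HasGradientAt fhat (g i) (w i)) := by
  rcases isEmpty_or_nonempty J with _ | _
  · exact ⟨0, convexOn_const 0 convex_univ, fun u v => by simpa using by positivity,
      isEmptyElim, isEmptyElim⟩
  have hlip := lipschitzWith_maxAffine f g w (K := ⟨L, hL⟩) hbound
  refine ⟨maxAffine f g w, convexOn_maxAffine f g w, fun u v => ?_,
    fun j => maxAffine_apply_eq (hineq j), fun i hi => hasGradientAt_maxAffine (hineq i) hi⟩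
  rw [← Real.dist_eq, ← dist_eq_norm]
  exact hlip.dist_le_mul u v
end

section
/- For every 0 < η ≤ 1 and every integer T ≥ 1, there exists a convex, 1-Lipschitz function f : ℝ → ℝ such that for any choice of subgradients, projected gradient descent on the interval [−1, 1] with step size η and T iterations started at 0 (with averaged output x^GD = (1/T) Σ_{t=1}^T x_t) satisfies f(x^GD) − min_{x∈[−1,1]} f(x) ≥ min{ η/6 + 1/(6ηT), 1/6 }. In particular, the optimization error of GD cannot beat Θ(η + 1/(ηT)) even in dimension one. -/
/-!
Take `f y = s |y - κ|` with `s ≤ 1`. At an interior point other than `κ` the only subgradient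
is `± s`, so GD moves in steps of `B = η s`: from `0` it walks down `M` steps to `-M B`, just
below `κ`, and then bounces between `-M B` and `-M B + B` forever. The bounce keeps the average
about `B / 2` above `κ`, an error of about `η s² / 2`, while the descent adds about
`(M B)² / (2 η T)`. For `η > 3/8` a pure bounce (`M = 0`) already costs `1/6`; for `η ≤ 3/8`
take `M = ⌈5 / (4 η)⌉` and `M B = 24/25`.
-/

open Set Filter Topology

def vee (s κ : ℝ) (y : ℝ) : ℝ := s * |y - κ|

theorem convexOn_vee {s : ℝ} (κ : ℝ) (hs : 0 ≤ s) : ConvexOn ℝ univ (vee s κ) := by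
  have h : vee s κ = fun y => s • dist y κ := by
    funext y
    simp [vee, Real.dist_eq]
  exact h ▸ (convexOn_dist κ convex_univ).smul hs

theorem abs_vee_sub_vee_le {s : ℝ} (κ : ℝ) (hs : 0 ≤ s) (u v : ℝ) :
    |vee s κ u - vee s κ v| ≤ s * |u - v| := by
  rw [vee, vee, ← mul_sub, abs_mul, abs_of_nonneg hs]
  exact mul_le_mul_of_nonneg_left (by simpa using abs_abs_sub_abs_le_abs_sub (u - κ) (v - κ)) hs

theorem hasDerivAt_vee_of_lt {s κ x : ℝ} (h : κ < x) : HasDerivAt (vee s κ) s x := by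
  have : vee s κ =ᶠ[𝓝 x] fun y => s * (y - κ) := by
    filter_upwards [lt_mem_nhds h] with y hy
    rw [vee, abs_of_pos (sub_pos.2 hy)]
  simpa using (((hasDerivAt_id x).sub_const κ).const_mul s).congr_of_eventuallyEq this

theorem hasDerivAt_vee_of_gt {s κ x : ℝ} (h : x < κ) : HasDerivAt (vee s κ) (-s) x := by
  have : vee s κ =ᶠ[𝓝 x] fun y => -s * (y - κ) := by
    filter_upwards [gt_mem_nhds h] with y hy
    rw [vee, abs_of_neg (sub_neg.2 hy)]
    ring
  simpa using (((hasDerivAt_id x).sub_const κ).const_mul (-s)).congr_of_eventuallyEq this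

theorem HasDerivAt.eq_of_subgradient {f : ℝ → ℝ} {f' g x : ℝ} {S : Set ℝ}
    (hf : HasDerivAt f f' x) (hS : S ∈ 𝓝 x) (hg : ∀ y ∈ S, f y ≥ f x + g * (y - x)) :
    g = f' := by
  have hmin : IsLocalMin (fun y => f y - g * (y - x)) x := by
    filter_upwards [hS] with y hy
    simpa using sub_le_sub_right (hg y hy) (g * (y - x))
  have hd := hf.fun_sub (((hasDerivAt_id x).sub_const x).const_mul g)
  have := hmin.hasDerivAt_eq_zero (by simpa using hd)
  linarith

def IsProjGDStep (f : ℝ → ℝ) (η a b : ℝ) : Prop :=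
  ∃ g : ℝ, (∀ y ∈ Icc (-1 : ℝ) 1, f y ≥ f a + g * (y - a)) ∧ b = max (-1) (min 1 (a - η * g))

theorem IsProjGDStep.eq_sub_of_hasDerivAt {f : ℝ → ℝ} {η a b f' : ℝ}
    (hstep : IsProjGDStep f η a b) (hf : HasDerivAt f f' a) (ha : a ∈ Ioo (-1) 1)
    (hb : a - η * f' ∈ Icc (-1) 1) : b = a - η * f' := by
  obtain ⟨g, hg, rfl⟩ := hstep
  rw [hf.eq_of_subgradient (Icc_mem_nhds ha.1 ha.2) hg, min_eq_right hb.2, max_eq_right hb.1]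

/-- The `t`-th GD iterate on the V is `(veeHeight M t - M) * B`. -/
def veeHeight (M t : ℕ) : ℕ := if t ≤ M then M - t else (t - M) % 2

theorem veeHeight_zero (M : ℕ) : veeHeight M 0 = M := by simp [veeHeight]

theorem veeHeight_succ (M t : ℕ) :
    veeHeight M (t + 1) = if veeHeight M t = 0 then 1 else veeHeight M t - 1 := by
  unfold veeHeight
  split_ifs <;> omega

theorem veeHeight_le (M t : ℕ) : veeHeight M t ≤ M ∨ veeHeight M t ≤ 1 := by
  unfold veeHeight
  split_ifs <;> omega

theorem veePath_mem_Ioo {B : ℝ} {M : ℕ} (hB : 0 < B) (hMB : M * B < 1) (hB1 : B < 1 + M * B)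
    (t : ℕ) :
    ((veeHeight M t : ℝ) - M) * B ∈ Ioo (-1) 1 := by
  have hh : (0 : ℝ) ≤ veeHeight M t := Nat.cast_nonneg _
  constructor
  · nlinarith
  · rcases veeHeight_le M t with h | h
    · have : (veeHeight M t : ℝ) ≤ M := by exact_mod_cast h
      nlinarith
    · have : (veeHeight M t : ℝ) ≤ 1 := by exact_mod_cast h
      nlinarith

theorem eq_veePath_of_isProjGDStep {s η κ : ℝ} {M T : ℕ} {x : ℕ → ℝ} (hB : 0 < η * s)
    (hMB : M * (η * s) < 1) (hB1 : η * s < 1 + M * (η * s))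
    (hκ : κ ∈ Ioo (-(M * (η * s))) (η * s - M * (η * s)))
    (hx0 : x 0 = 0) (hgd : ∀ t < T, IsProjGDStep (vee s κ) η (x t) (x (t + 1))) :
    ∀ t ≤ T, x t = ((veeHeight M t : ℝ) - M) * (η * s) := by
  set p : ℕ → ℝ := fun t => ((veeHeight M t : ℝ) - M) * (η * s) with hp
  have hmem : ∀ t, p t ∈ Icc (-1) 1 := fun t =>
    Ioo_subset_Icc_self (veePath_mem_Ioo hB hMB hB1 t)
  intro t
  induction t with
  | zero => simp [veeHeight_zero, hx0]
  | succ t ih =>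
    intro ht
    have hxt : x t = p t := ih (by omega)
    have hxt_mem : x t ∈ Ioo (-1) 1 := hxt ▸ veePath_mem_Ioo hB hMB hB1 t
    by_cases h0 : veeHeight M t = 0
    · have hlt : x t < κ := by simp only [hxt, hp, h0, Nat.cast_zero]; linarith [hκ.1]
      have hnext : x t - η * -s = p (t + 1) := by
        simp only [hxt, hp, veeHeight_succ, h0]
        push_cast
        ring
      rw [(hgd t (by omega)).eq_sub_of_hasDerivAt (hasDerivAt_vee_of_gt hlt) hxt_mem
        (hnext ▸ hmem (t + 1)), hnext]
    · have h1 : (1 : ℝ) ≤ veeHeight M t := by exact_mod_cast Nat.one_le_iff_ne_zero.2 h0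
      have hgt : κ < x t := by simp only [hxt, hp]; nlinarith [hκ.2]
      have hnext : x t - η * s = p (t + 1) := by
        simp only [hxt, hp, veeHeight_succ, if_neg h0]
        push_cast [Nat.cast_sub (Nat.one_le_iff_ne_zero.2 h0)]
        ring
      rw [(hgd t (by omega)).eq_sub_of_hasDerivAt (hasDerivAt_vee_of_lt hgt) hxt_mem
        (hnext ▸ hmem (t + 1)), hnext]

section Sums

open Finset

theorem two_mul_sum_veeHeight_of_le {M T : ℕ} (h : T ≤ M) :
    2 * ∑ t ∈ Icc 1 T, (veeHeight M t : ℝ) + T * (T + 1) = 2 * T * M := by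
  induction T with
  | zero => simp
  | succ T ih =>
    have hh : veeHeight M (T + 1) = M - (T + 1) := if_pos h
    rw [sum_Icc_succ_top (by omega), hh, Nat.cast_sub h]
    push_cast
    linear_combination ih (by omega)

theorem two_mul_sum_veeHeight_add (M n : ℕ) :
    2 * ∑ t ∈ Icc 1 (M + n), (veeHeight M t : ℝ) = M * (M - 1) + n + (n % 2 : ℕ) := by
  induction n with
  | zero =>
    simp only [add_zero, CharP.cast_eq_zero, Nat.zero_mod]
    linear_combination two_mul_sum_veeHeight_of_le (le_refl M)
  | succ n ih =>
    have hh : veeHeight M (M + n + 1) = (n + 1) % 2 := by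
      rw [veeHeight, if_neg (by omega)]
      congr 1
      omega
    have hpar : ((n % 2 : ℕ) : ℝ) + 2 * ((n + 1) % 2 : ℕ) = 1 + ((n + 1) % 2 : ℕ) := by
      exact_mod_cast (by omega : n % 2 + 2 * ((n + 1) % 2) = 1 + (n + 1) % 2)
    rw [← add_assoc, sum_Icc_succ_top (by omega), hh]
    push_cast
    linear_combination ih + hpar

theorem mul_sub_one_le_two_mul_sum_veeHeight {M T : ℕ} (h : T ≤ M) :
    T * ((M : ℝ) - 1) ≤ 2 * ∑ t ∈ Icc 1 T, (veeHeight M t : ℝ) := by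
  have hTM : (T : ℝ) ≤ M := by exact_mod_cast h
  nlinarith [two_mul_sum_veeHeight_of_le h, (Nat.cast_nonneg T : (0 : ℝ) ≤ T)]

theorem add_mul_sub_two_le_two_mul_sum_veeHeight {M T : ℕ} (h : M ≤ T) :
    T + M * ((M : ℝ) - 2) ≤ 2 * ∑ t ∈ Icc 1 T, (veeHeight M t : ℝ) := by
  obtain ⟨n, rfl⟩ := Nat.exists_eq_add_of_le h
  rw [two_mul_sum_veeHeight_add]
  push_cast
  nlinarith [(Nat.cast_nonneg (n % 2) : (0 : ℝ) ≤ (n % 2 : ℕ))]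

end Sums

theorem sInf_image_vee_le_zero {s κ : ℝ} (hs : 0 ≤ s) (hκ : κ ∈ Icc (-1 : ℝ) 1) :
    sInf (vee s κ '' Icc (-1) 1) ≤ 0 := by
  refine csInf_le ⟨0, ?_⟩ ⟨κ, hκ, by simp [vee]⟩
  rintro _ ⟨y, -, rfl⟩
  exact mul_nonneg hs (abs_nonneg _)

def GDExcessAtLeast (f : ℝ → ℝ) (η : ℝ) (T : ℕ) (L : ℝ) : Prop :=
  ∀ x : ℕ → ℝ, x 0 = 0 → (∀ t < T, IsProjGDStep f η (x t) (x (t + 1))) →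
    L ≤ f ((T : ℝ)⁻¹ * ∑ t ∈ Finset.Icc 1 T, x t) - sInf (f '' Icc (-1) 1)

theorem gdExcessAtLeast_vee {η s κ L : ℝ} {M T : ℕ} (hη : 0 < η) (hs : 0 < s) (hT : 0 < T)
    (hMB : M * (η * s) < 1) (hB1 : η * s < 1 + M * (η * s))
    (hκ : κ ∈ Ioo (-(M * (η * s))) (η * s - M * (η * s)))
    (hL : L ≤ s * (η * s * (∑ t ∈ Finset.Icc 1 T, (veeHeight M t : ℝ)) / T
      - (κ + M * (η * s)))) :
    GDExcessAtLeast (vee s κ) η T L := by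
  intro x hx0 hgd
  have hpath := eq_veePath_of_isProjGDStep (mul_pos hη hs) hMB hB1 hκ hx0 hgd
  have havg : (T : ℝ)⁻¹ * ∑ t ∈ Finset.Icc 1 T, x t - κ
      = η * s * (∑ t ∈ Finset.Icc 1 T, (veeHeight M t : ℝ)) / T - (κ + M * (η * s)) := by
    rw [Finset.sum_congr rfl fun t ht => hpath t (Finset.mem_Icc.1 ht).2, ← Finset.sum_mul,
      Finset.sum_sub_distrib]
    simp only [Finset.sum_const, Nat.card_Icc, add_tsub_cancel_right, nsmul_eq_mul]
    field_simp
    ring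
  have hκ' : κ ∈ Icc (-1 : ℝ) 1 := ⟨by linarith [hκ.1], by linarith [hκ.2]⟩
  calc L ≤ s * ((T : ℝ)⁻¹ * ∑ t ∈ Finset.Icc 1 T, x t - κ) := havg ▸ hL
    _ ≤ vee s κ ((T : ℝ)⁻¹ * ∑ t ∈ Finset.Icc 1 T, x t) :=
        mul_le_mul_of_nonneg_left (le_abs_self _) hs.le
    _ ≤ _ := by linarith [sInf_image_vee_le_zero hs.le hκ']

theorem exists_gdExcessAtLeast_vee_of_three_eighths_lt {η : ℝ} (hη : 3 / 8 < η) (hη1 : η ≤ 1)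
    {T : ℕ} (hT : 0 < T) : ∃ s κ : ℝ, 0 ≤ s ∧ s ≤ 1 ∧
      GDExcessAtLeast (vee s κ) η T (min (η / 6 + 1 / (6 * η * (T : ℝ))) (1 / 6)) := by
  have hmean : (1 : ℝ) / 2 ≤ (∑ t ∈ Finset.Icc 1 T, (veeHeight 0 t : ℝ)) / T := by
    have := add_mul_sub_two_le_two_mul_sum_veeHeight (Nat.zero_le T)
    rw [le_div_iff₀ (by positivity)]
    push_cast at this
    linarith
  refine ⟨24 / 25, η * (24 / 25) / 100, by norm_num, by norm_num, ?_⟩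
  refine gdExcessAtLeast_vee (M := 0) (by linarith) (by norm_num) hT (by norm_num)
    (by norm_num; linarith) ⟨by norm_num; positivity, by norm_num; linarith⟩
    ((min_le_right _ _).trans ?_)
  simp only [CharP.cast_eq_zero, zero_mul, add_zero, mul_div_assoc]
  nlinarith

theorem exists_gdExcessAtLeast_vee_of_le_three_eighths {η : ℝ} (hη0 : 0 < η) (hη : η ≤ 3 / 8)
    {T : ℕ} (hT : 0 < T) : ∃ s κ : ℝ, 0 ≤ s ∧ s ≤ 1 ∧
      GDExcessAtLeast (vee s κ) η T (min (η / 6 + 1 / (6 * η * (T : ℝ))) (1 / 6)) := by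
  set M := ⌈5 / (4 * η)⌉₊ with hM
  have hM4 : (4 : ℝ) ≤ M := by
    have : 3 < M := Nat.lt_ceil.2 (by rw [lt_div_iff₀ (by positivity)]; push_cast; linarith)
    exact_mod_cast this
  have hηM : 5 / 4 ≤ η * M := by
    have := Nat.le_ceil (5 / (4 * η))
    rw [div_le_iff₀ (by positivity)] at this
    linarith
  have hηM' : η * M < 13 / 8 := by
    have := Nat.ceil_lt_add_one (show 0 ≤ 5 / (4 * η) by positivity)
    rw [← hM, ← sub_lt_iff_lt_add, lt_div_iff₀ (by positivity)] at this
    linarith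
  set s := 24 / (25 * (η * M)) with hs
  have hB : η * s = 24 / 25 / M := by rw [hs]; field_simp
  have hMB : M * (η * s) = 24 / 25 := by rw [hB]; field_simp
  have hs0 : 0 < s := by positivity
  have hs_lb : 192 / 325 ≤ s := by rw [hs, le_div_iff₀ (by positivity)]; linarith
  have hB_ub : η * s ≤ 6 / 25 := by
    rw [hB, div_le_iff₀ (by positivity)]
    linarith
  set m := (∑ t ∈ Finset.Icc 1 T, (veeHeight M t : ℝ)) / T with hm
  have hT' : (0 : ℝ) < T := by exact_mod_cast hT
  refine ⟨s, η * s / 100 - M * (η * s), hs0.le,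
    by rw [hs, div_le_one (by positivity)]; linarith, ?_⟩
  refine gdExcessAtLeast_vee hη0 hs0 hT (by linarith) (by nlinarith)
    ⟨by nlinarith, by nlinarith⟩ ?_
  rw [mul_div_assoc, ← hm]
  set B := η * s with hBdef
  have hB0 : 0 < B := by positivity
  rcases le_total T M with hTM | hMT
  · have hmean : ((M : ℝ) - 1) / 2 ≤ m := by
      have := mul_sub_one_le_two_mul_sum_veeHeight hTM
      rw [hm, le_div_iff₀ hT']
      linarith
    have hBm : 894 / 2500 ≤ B * m - B / 100 := by
      nlinarith [mul_le_mul_of_nonneg_left hmean hB0.le]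
    refine (min_le_right _ _).trans ?_
    nlinarith [mul_le_mul hs_lb hBm (by norm_num) hs0.le]
  · have hmean : M * ((M : ℝ) - 2) ≤ T * (2 * m - 1) := by
      have := add_mul_sub_two_le_two_mul_sum_veeHeight hMT
      rw [show ∑ t ∈ Finset.Icc 1 T, (veeHeight M t : ℝ) = T * m by rw [hm]; field_simp]
        at this
      linarith
    refine (min_le_left _ _).trans ?_
    have hosc : η / 6 ≤ s * (B * (49 / 100)) := by nlinarith
    have hdesc : 1 / (6 * η * T) ≤ s * (B * (m - 1 / 2)) := by
      rw [div_le_iff₀ (by positivity)]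
      calc (1 : ℝ) ≤ 3 * (M * B) * (M * B - 2 * B) := by rw [hMB]; nlinarith
        _ = 3 * B * B * (M * (M - 2)) := by ring
        _ ≤ 3 * B * B * (T * (2 * m - 1)) := by gcongr
        _ = s * (B * (m - 1 / 2)) * (6 * η * T) := by rw [hBdef]; ring
    linarith

/-- For every `0 < η ≤ 1` and `T ≥ 1` there is a convex `1`-Lipschitz
function `f : ℝ → ℝ` such that for any choice of subgradients, projected gradient descent on
`[−1, 1]` with step size `η`, `T` iterations and averaged output satisfies
`f(x^GD) − min_{[−1,1]} f ≥ min{η/6 + 1/(6ηT), 1/6}`. -/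
theorem gd_optimization_lower_bound_dim_one
    (η : ℝ) (hη0 : 0 < η) (hη1 : η ≤ 1) (T : ℕ) (hT : 1 ≤ T) :
    ∃ f : ℝ → ℝ, ConvexOn ℝ Set.univ f ∧ (∀ u v : ℝ, |f u - f v| ≤ 1 * |u - v|) ∧
      ∀ x : ℕ → ℝ, x 0 = 0 →
        (∀ t, t < T → ∃ g : ℝ,
          (∀ y ∈ Set.Icc (-1 : ℝ) 1, f y ≥ f (x t) + g * (y - x t)) ∧
          x (t + 1) = max (-1) (min 1 (x t - η * g))) →
        min (η / 6 + 1 / (6 * η * (T : ℝ))) (1 / 6) ≤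
          f ((T : ℝ)⁻¹ * ∑ t ∈ Finset.Icc 1 T, x t) - sInf (f '' Set.Icc (-1 : ℝ) 1) := by
  obtain ⟨s, κ, hs, hs1, hexcess⟩ : ∃ s κ : ℝ, 0 ≤ s ∧ s ≤ 1 ∧
      GDExcessAtLeast (vee s κ) η T (min (η / 6 + 1 / (6 * η * (T : ℝ))) (1 / 6)) := by
    rcases le_or_gt η (3 / 8) with hη | hη
    · exact exists_gdExcessAtLeast_vee_of_le_three_eighths hη0 hη hT
    · exact exists_gdExcessAtLeast_vee_of_three_eighths_lt hη hη1 hT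
  exact ⟨vee s κ, convexOn_vee κ hs,
    fun u v => (abs_vee_sub_vee_le κ hs u v).trans (by gcongr), hexcess⟩
end

section
/- For every d ≥ 4096 there exists a set 𝒱 ⊆ {0,1}^d such that: (i) |𝒱| ≥ e^{d/258}; (ii) every v ∈ 𝒱 satisfies ‖v‖² ≥ 7d/16 (i.e., v has at least 7d/16 coordinates equal to 1); and (iii) for every pair of distinct v₁, v₂ ∈ 𝒱, v₁·v₂ ≤ 5d/16. -/
/-!
Choose `d/2`-subsets of `Fin d` greedily, each time discarding the sets that meet the chosen one
in more than `5d/16` points. A step discards at most one such "ball", so the family has at least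
`C(d, d/2) / |ball|` members, with `C(d, d/2) ≥ 2^d / (d + 1)`. The exponential moment bound
`#{u | k ≤ #(u ∩ B)} x^k ≤ ∑_u x^#(u ∩ B) = (1 + x)^#B 2^(d - #B)` at `x = 5/3` gives
`|ball| ≤ 2^d (4/3)^(d/2) (3/5)^(5d/16)`, and
`(4/3)^8 (3/5)^5 = 65536/84375 < e^(-16/258 - 16/100)` leaves room for the factor
`d + 1 ≤ e^(d/100)`. The indicator vectors of the family are the set.
-/

open Finset Real

theorem Finset.exists_subset_pairwise_not_rel_card_le_mul {α : Type*} [DecidableEq α]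
    (r : α → α → Prop) [DecidableRel r] (hr : ∀ a b, r a b → r b a) (M : ℝ)
    (U : Finset α) (hrefl : ∀ u ∈ U, r u u) (hM : ∀ v ∈ U, (#{u ∈ U | r u v} : ℝ) ≤ M) :
    ∃ S ⊆ U, (S : Set α).Pairwise (fun a b => ¬ r a b) ∧ (#U : ℝ) ≤ #S * M := by
  induction U using Finset.strongInduction with
  | H U ih =>
    obtain rfl | ⟨u, hu⟩ := U.eq_empty_or_nonempty
    · exact ⟨∅, empty_subset _, by simp, by simp⟩
    set U' := {v ∈ U | ¬ r v u}
    have hU' : U' ⊂ U := filter_ssubset.2 ⟨u, hu, not_not.2 (hrefl u hu)⟩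
    obtain ⟨S, hSU', hS, hcard⟩ := ih U' hU' (fun v hv => hrefl v (filter_subset _ _ hv))
      fun v hv => le_trans (by gcongr) (hM v (filter_subset _ _ hv))
    have huS : u ∉ S := fun h => (mem_filter.1 (hSU' h)).2 (hrefl u hu)
    refine ⟨insert u S, insert_subset hu (hSU'.trans (filter_subset _ _)), ?_, ?_⟩
    · rw [coe_insert, Set.pairwise_insert]
      refine ⟨hS, fun b hb _ => ?_⟩
      have hbu : ¬ r b u := (mem_filter.1 (hSU' hb)).2
      exact ⟨fun h => hbu (hr _ _ h), hbu⟩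
    · rw [card_insert_of_notMem huS, ← card_filter_add_card_filter_not (s := U) (r · u)]
      push_cast
      linarith [hM u hu]

theorem Finset.sum_pow_card_inter {α R : Type*} [Fintype α] [DecidableEq α] [CommSemiring R]
    (B : Finset α) (x : R) :
    ∑ u : Finset α, x ^ #(u ∩ B) = (1 + x) ^ #B * 2 ^ (Fintype.card α - #B) := by
  have h := prod_one_add (f := fun i => if i ∈ B then x else 1) (univ : Finset α)
  simp only [powerset_univ, prod_ite_mem, prod_const] at h
  rw [← h, ← card_compl, ← prod_mul_prod_compl B, ← prod_const, ← prod_const]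
  congr 1 <;> refine prod_congr rfl fun i hi => ?_
  · rw [if_pos hi]
  · rw [if_neg (mem_compl.1 hi), one_add_one_eq_two]

theorem Finset.card_le_card_inter_mul_pow_le {α : Type*} [Fintype α] [DecidableEq α]
    (B : Finset α) (k : ℕ) {x : ℝ} (hx : 1 ≤ x) :
    #{u : Finset α | k ≤ #(u ∩ B)} * x ^ k ≤ (1 + x) ^ #B * 2 ^ (Fintype.card α - #B) := by
  rw [← sum_pow_card_inter, ← nsmul_eq_mul, ← sum_const]
  calc ∑ _u ∈ {u : Finset α | k ≤ #(u ∩ B)}, x ^ k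
      ≤ ∑ u ∈ {u : Finset α | k ≤ #(u ∩ B)}, x ^ #(u ∩ B) :=
        sum_le_sum fun u hu => pow_le_pow_right₀ hx (mem_filter.1 hu).2
    _ ≤ ∑ u, x ^ #(u ∩ B) :=
        sum_le_sum_of_subset_of_nonneg (subset_univ _) fun _ _ _ => by positivity

theorem Nat.two_pow_le_succ_mul_choose_half (n : ℕ) : 2 ^ n ≤ (n + 1) * n.choose (n / 2) :=
  calc 2 ^ n = ∑ m ∈ range (n + 1), n.choose m := (sum_range_choose n).symm
    _ ≤ ∑ _m ∈ range (n + 1), n.choose (n / 2) := sum_le_sum fun m _ => choose_le_middle m n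
    _ = (n + 1) * n.choose (n / 2) := by simp

theorem add_one_le_exp_div_hundred {x : ℝ} (hx : 4096 ≤ x) : x + 1 ≤ exp (x / 100) := by
  have h := pow_div_factorial_le_exp (x := x / 100) (by positivity) 4
  have hx3 : 4096 ^ 3 ≤ x ^ 3 := by gcongr
  norm_num [Nat.factorial] at h
  nlinarith

theorem pow_eq_exp_mul_log {a : ℝ} (ha : 0 < a) (n : ℕ) : a ^ n = exp (n * log a) := by
  rw [exp_nat_mul, exp_log ha]

theorem exp_mul_four_thirds_pow_mul_le {d : ℕ} (hd : 4096 ≤ d) :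
    exp (d / 258) * (4 / 3) ^ (d / 2) * (d + 1) ≤ (5 / 3) ^ (5 * d / 16 + 1) := by
  have hdR : (4096 : ℝ) ≤ d := by exact_mod_cast hd
  have hw : ((d / 2 : ℕ) : ℝ) ≤ d / 2 := Nat.cast_div_le
  have hk : 5 * (d : ℝ) / 16 ≤ (5 * d / 16 + 1 : ℕ) := by
    have : 5 * d ≤ (5 * d / 16 + 1) * 16 := by omega
    rw [div_le_iff₀ (by norm_num)]
    exact_mod_cast this
  have hlog : 8 * log (4 / 3) - 5 * log (5 / 3) ≤ 65536 / 84375 - 1 := by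
    have h := log_le_sub_one_of_pos (show (0 : ℝ) < (4 / 3) ^ 8 / (5 / 3) ^ 5 by positivity)
    rw [log_div (by positivity) (by positivity), log_pow, log_pow] at h
    norm_num at h ⊢
    linarith
  have hL₁ : 0 ≤ log (4 / 3 : ℝ) := log_nonneg (by norm_num)
  have hL₂ : 0 ≤ log (5 / 3 : ℝ) := log_nonneg (by norm_num)
  rw [pow_eq_exp_mul_log (by norm_num), pow_eq_exp_mul_log (by norm_num), ← exp_add]
  calc _ ≤ exp (d / 258 + d / 2 * log (4 / 3)) * exp (d / 100) := by
        gcongr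
        exact add_one_le_exp_div_hundred hdR
    _ ≤ exp (5 * d / 16 * log (5 / 3)) := by
        rw [← exp_add]
        gcongr
        nlinarith
    _ ≤ _ := by gcongr

theorem exists_large_family_card_inter_le {d : ℕ} (hd : 4096 ≤ d) :
    ∃ S : Finset (Finset (Fin d)), (∀ A ∈ S, #A = d / 2) ∧
      (S : Set (Finset (Fin d))).Pairwise (fun A B => 16 * #(A ∩ B) ≤ 5 * d) ∧
      exp (d / 258) ≤ #S := by
  set w := d / 2
  set k := 5 * d / 16 + 1
  set M : ℝ := (8 / 3) ^ w * 2 ^ (d - w) / (5 / 3) ^ k with hM_def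
  have hball : ∀ B ∈ powersetCard w (univ : Finset (Fin d)),
      (#{A ∈ powersetCard w univ | k ≤ #(A ∩ B)} : ℝ) ≤ M := by
    intro B hB
    rw [le_div_iff₀ (by positivity)]
    calc (#{A ∈ powersetCard w univ | k ≤ #(A ∩ B)} : ℝ) * (5 / 3) ^ k
        ≤ #{A : Finset (Fin d) | k ≤ #(A ∩ B)} * (5 / 3) ^ k := by
          gcongr
          exact subset_univ _
      _ ≤ _ := by
          have := card_le_card_inter_mul_pow_le B k (x := 5 / 3) (by norm_num)
          rwa [(mem_powersetCard.1 hB).2, Fintype.card_fin,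
            show (1 : ℝ) + 5 / 3 = 8 / 3 by norm_num] at this
  obtain ⟨S, hSU, hS, hcard⟩ := exists_subset_pairwise_not_rel_card_le_mul
    (fun A B => k ≤ #(A ∩ B)) (fun A B h => by rwa [inter_comm]) M (powersetCard w univ)
    (fun A hA => by rw [inter_self, (mem_powersetCard.1 hA).2]; omega) hball
  refine ⟨S, fun A hA => (mem_powersetCard.1 (hSU hA)).2, hS.mono' fun A B h => by omega, ?_⟩
  have hM : exp (d / 258) * M ≤ d.choose w := by
    have hchoose : (2 : ℝ) ^ d ≤ (d + 1) * d.choose w := by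
      exact_mod_cast Nat.two_pow_le_succ_mul_choose_half d
    have h2 : (8 / 3 : ℝ) ^ w * 2 ^ (d - w) = 2 ^ d * (4 / 3) ^ w := by
      rw [show (8 / 3 : ℝ) = 2 * (4 / 3) by norm_num, mul_pow, mul_right_comm, ← pow_add,
        Nat.add_sub_cancel' (Nat.div_le_self d 2)]
    rw [hM_def, h2, mul_div_assoc', div_le_iff₀ (by positivity)]
    calc exp (d / 258) * (2 ^ d * (4 / 3) ^ w)
        ≤ exp (d / 258) * ((d + 1) * d.choose w * (4 / 3) ^ w) := by gcongr
      _ = exp (d / 258) * (4 / 3) ^ w * (d + 1) * d.choose w := by ring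
      _ ≤ (5 / 3) ^ k * d.choose w := by gcongr; exact exp_mul_four_thirds_pow_mul_le hd
      _ = _ := mul_comm _ _
  rw [card_powersetCard, card_univ, Fintype.card_fin] at hcard
  exact le_of_mul_le_mul_right (hM.trans hcard) (by positivity)

theorem sum_boole_mul_boole {ι : Type*} [Fintype ι] [DecidableEq ι] (A B : Finset ι) :
    ∑ i, (if i ∈ A then (1 : ℝ) else 0) * (if i ∈ B then 1 else 0) = #(A ∩ B) := by
  simp only [ite_zero_mul_ite_zero, mul_one, ← mem_inter, sum_boole, filter_mem_eq_inter,
    univ_inter]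

/-- **Feldman's set.** For every `d ≥ 4096` there is a set `𝒱 ⊆ {0,1}^d` with
`|𝒱| ≥ e^{d/258}`, such that every `v ∈ 𝒱` satisfies `‖v‖² ≥ 7d/16` and every pair of
distinct `v₁, v₂ ∈ 𝒱` satisfies `v₁·v₂ ≤ 5d/16`. -/
theorem feldman_set_exists (d : ℕ) (hd : 4096 ≤ d) :
    ∃ V : Finset (Fin d → ℝ),
      (∀ v ∈ V, ∀ i, v i = 0 ∨ v i = 1) ∧
      Real.exp ((d : ℝ) / 258) ≤ (V.card : ℝ) ∧
      (∀ v ∈ V, 7 * (d : ℝ) / 16 ≤ ∑ i, v i * v i) ∧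
      (∀ v₁ ∈ V, ∀ v₂ ∈ V, v₁ ≠ v₂ → ∑ i, v₁ i * v₂ i ≤ 5 * (d : ℝ) / 16) := by
  obtain ⟨S, hS_card, hS_inter, hS_large⟩ := exists_large_family_card_inter_le hd
  set χ : Finset (Fin d) → Fin d → ℝ := fun A i => if i ∈ A then 1 else 0
  have hχ : Function.Injective χ := fun A B h => by
    ext i
    have hi := congrFun h i
    by_cases hA : i ∈ A <;> by_cases hB : i ∈ B <;> simp_all [χ]
  refine ⟨S.image χ, ?_, by rwa [card_image_of_injective _ hχ], ?_, ?_⟩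
  · simp only [forall_mem_image]
    intro A _ i
    by_cases hi : i ∈ A <;> simp [χ, hi]
  · simp only [forall_mem_image, χ, sum_boole_mul_boole, inter_self]
    intro A hA
    have : 7 * d ≤ 16 * #A := by rw [hS_card A hA]; omega
    have : 7 * (d : ℝ) ≤ 16 * #A := by exact_mod_cast this
    linarith
  · simp only [forall_mem_image, χ, sum_boole_mul_boole]
    intro A hA B hB hAB
    have : 16 * #(A ∩ B) ≤ 5 * d := hS_inter hA hB (fun h => hAB (h ▸ rfl))
    have : 16 * (#(A ∩ B) : ℝ) ≤ 5 * d := by exact_mod_cast this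
    linarith
end

section
/- Consider the block dynamics with parameters d, k, d', η, α. Then for every t ≥ 1 the iterates satisfy ‖w_t‖² ≤ 2η²α²·t. In particular, if α ≤ 1/(η√(2T)), then every iterate w_t with t ≤ T lies in the closed Euclidean unit ball (so running projected gradient descent on the unit ball with these update directions performs no projections up to time T). -/
open scoped BigOperators

/-- The block average `w(I_j) = (1/√k) ∑_{i ∈ I_j} w(i)`, where (in `0`-indexed coordinates)
`I_j = {(j−1)k, …, jk−1}` is the `j`-th block of `k` coordinates, `j = 1, …, d'/k`. -/
noncomputable def blockVal (d k : ℕ) (w : EuclideanSpace ℝ (Fin d)) (j : ℕ) : ℝ :=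
  (Real.sqrt k)⁻¹ *
    ∑ i ∈ Finset.univ.filter (fun i : Fin d => (j - 1) * k ≤ (i : ℕ) ∧ (i : ℕ) < j * k), w i

/-- The unit block vector `e_{I_j} = (1/√k) ∑_{i ∈ I_j} e_i`. -/
noncomputable def blockVec (d k : ℕ) (j : ℕ) : EuclideanSpace ℝ (Fin d) := WithLp.toLp 2 fun i =>
  if (j - 1) * k ≤ (i : ℕ) ∧ (i : ℕ) < j * k then (Real.sqrt k)⁻¹ else 0

open scoped Classical in
/-- One step of the block dynamics with `D = d'/k` blocks: `w ↦ w − η·g` where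
`g = α(e_{I_{j+1}} − e_{I_j})` for the least `1 ≤ j < D` with `w(I_j) = w(I_{j+1}) > ηα`
if one exists; otherwise `g = −α·e_{I_j}` for the least `1 ≤ j ≤ D` with `w(I_j) = 0` if one
exists; otherwise `g = 0`. -/
noncomputable def blockStep (d k D : ℕ) (η α : ℝ) (w : EuclideanSpace ℝ (Fin d)) :
    EuclideanSpace ℝ (Fin d) :=
  if h1 : ∃ j, 1 ≤ j ∧ j < D ∧ blockVal d k w j = blockVal d k w (j + 1) ∧
      η * α < blockVal d k w j then
    w - η • (α • (blockVec d k (Nat.find h1 + 1) - blockVec d k (Nat.find h1)))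
  else if h2 : ∃ j, 1 ≤ j ∧ j ≤ D ∧ blockVal d k w j = 0 then
    w - η • (-(α • blockVec d k (Nat.find h2)))
  else w

/-- The block-dynamics trajectory: `w_0 = 0`, `w_{t+1} = blockStep w_t`. -/
noncomputable def blockTraj (d k D : ℕ) (η α : ℝ) : ℕ → EuclideanSpace ℝ (Fin d)
  | 0 => 0
  | t + 1 => blockStep d k D η α (blockTraj d k D η α t)

/-!
Each step moves `w` along a direction orthogonal to `w` itself: a pair move `e_{I_{j+1}} − e_{I_j}`
is taken only when `⟪w, e_{I_j}⟫ = w(I_j) = w(I_{j+1}) = ⟪w, e_{I_{j+1}}⟫`, and a single move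
`e_{I_j}` only when `w(I_j) = 0`. Since the blocks are disjoint, the `e_{I_j}` are orthogonal
with norm at most one, so by Pythagoras `‖w‖²` grows by at most `2η²α²` per step.
-/

open scoped RealInnerProductSpace

theorem blockVal_eq_inner (d k : ℕ) (w : EuclideanSpace ℝ (Fin d)) (j : ℕ) :
    blockVal d k w j = ⟪w, blockVec d k j⟫ := by
  simp only [blockVec, blockVal, PiLp.inner_apply, RCLike.inner_apply, conj_trivial]
  rw [Finset.sum_filter, Finset.mul_sum]
  refine Finset.sum_congr rfl fun i _ => ?_
  split_ifs <;> simp [mul_comm]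

theorem card_filter_mem_block_le (d k j : ℕ) :
    (Finset.univ.filter fun i : Fin d => (j - 1) * k ≤ (i : ℕ) ∧ (i : ℕ) < j * k).card ≤ k := by
  calc _ ≤ (Finset.Ico ((j - 1) * k) (j * k)).card :=
        Finset.card_le_card_of_injOn Fin.val (fun i hi => by simpa using hi)
          Fin.val_injective.injOn
    _ ≤ k := by
        rw [Nat.card_Ico]
        rcases j with _ | j <;> simp [add_mul]

theorem norm_blockVec_sq_le_one (d k j : ℕ) : ‖blockVec d k j‖ ^ 2 ≤ 1 := by
  simp only [blockVec, EuclideanSpace.norm_sq_eq, apply_ite, norm_inv, Real.norm_eq_abs,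
    norm_zero, ite_pow, inv_pow, sq_abs, Nat.cast_nonneg, Real.sq_sqrt, ne_eq,
    OfNat.ofNat_ne_zero, not_false_eq_true, zero_pow, Finset.sum_ite, Finset.sum_const,
    nsmul_eq_mul, mul_zero, add_zero]
  calc _ ≤ (k : ℝ) * (k : ℝ)⁻¹ := by gcongr; exact card_filter_mem_block_le d k j
    _ ≤ 1 := mul_inv_le_one

theorem inner_blockVec_succ_blockVec (d k j : ℕ) :
    ⟪blockVec d k (j + 1), blockVec d k j⟫ = 0 := by
  simp only [blockVec, PiLp.inner_apply, RCLike.inner_apply, conj_trivial]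
  refine Finset.sum_eq_zero fun i _ => ?_
  rw [Nat.add_sub_cancel]
  split_ifs <;> first | omega | simp

theorem norm_sub_smul_sq_le_of_inner_eq_zero {E : Type*} [NormedAddCommGroup E]
    [InnerProductSpace ℝ E] {w g : E} (hwg : ⟪w, g⟫ = 0) {c : ℝ} (hg : ‖g‖ ^ 2 ≤ c) (η : ℝ) :
    ‖w - η • g‖ ^ 2 ≤ ‖w‖ ^ 2 + η ^ 2 * c := by
  rw [norm_sub_sq_real, real_inner_smul_right, hwg, norm_smul, mul_pow, Real.norm_eq_abs, sq_abs]
  linarith [mul_le_mul_of_nonneg_left hg (sq_nonneg η)]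

theorem norm_sub_blockVec_sq_le_two (d k j : ℕ) :
    ‖blockVec d k (j + 1) - blockVec d k j‖ ^ 2 ≤ 2 := by
  rw [norm_sub_sq_real, inner_blockVec_succ_blockVec]
  linarith [norm_blockVec_sq_le_one d k (j + 1), norm_blockVec_sq_le_one d k j]

theorem exists_blockStep_eq_sub_smul (d k D : ℕ) (η α : ℝ) (w : EuclideanSpace ℝ (Fin d)) :
    ∃ g, blockStep d k D η α w = w - η • g ∧ ⟪w, g⟫ = 0 ∧ ‖g‖ ^ 2 ≤ 2 * α ^ 2 := by
  classical
  unfold blockStep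
  split_ifs with hpair hzero
  · obtain ⟨-, -, hval, -⟩ := Nat.find_spec hpair
    refine ⟨_, rfl, ?_, ?_⟩
    · rw [real_inner_smul_right, inner_sub_right, ← blockVal_eq_inner, ← blockVal_eq_inner, hval,
        sub_self, mul_zero]
    · rw [norm_smul, mul_pow, Real.norm_eq_abs, sq_abs, mul_comm]
      exact mul_le_mul_of_nonneg_right (norm_sub_blockVec_sq_le_two d k _) (sq_nonneg α)
  · obtain ⟨-, -, hval⟩ := Nat.find_spec hzero
    refine ⟨_, rfl, ?_, ?_⟩
    · rw [inner_neg_right, real_inner_smul_right, ← blockVal_eq_inner, hval, mul_zero, neg_zero]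
    · rw [norm_neg, norm_smul, mul_pow, Real.norm_eq_abs, sq_abs]
      nlinarith [norm_blockVec_sq_le_one d k (Nat.find hzero), sq_nonneg α]
  · exact ⟨0, by rw [smul_zero, sub_zero], inner_zero_right w, by
      rw [norm_zero, sq, zero_mul]; positivity⟩

theorem norm_blockStep_sq_le (d k D : ℕ) (η α : ℝ) (w : EuclideanSpace ℝ (Fin d)) :
    ‖blockStep d k D η α w‖ ^ 2 ≤ ‖w‖ ^ 2 + 2 * η ^ 2 * α ^ 2 := by
  obtain ⟨g, hstep, hwg, hg⟩ := exists_blockStep_eq_sub_smul d k D η α w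
  rw [hstep, mul_assoc, mul_left_comm]
  exact norm_sub_smul_sq_le_of_inner_eq_zero hwg hg η

theorem norm_blockTraj_sq_le (d k D : ℕ) (η α : ℝ) (t : ℕ) :
    ‖blockTraj d k D η α t‖ ^ 2 ≤ 2 * η ^ 2 * α ^ 2 * t := by
  induction t with
  | zero => simp [blockTraj]
  | succ t ih =>
    calc ‖blockTraj d k D η α (t + 1)‖ ^ 2
        ≤ ‖blockTraj d k D η α t‖ ^ 2 + 2 * η ^ 2 * α ^ 2 := norm_blockStep_sq_le ..
      _ ≤ 2 * η ^ 2 * α ^ 2 * (t + 1 : ℕ) := by push_cast; linarith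

theorem two_mul_sq_mul_sq_mul_le_one_of_le_one_div {η α : ℝ} (hα : 0 < α) {T t : ℕ}
    (hαT : α ≤ 1 / (η * √(2 * T))) (ht : t ≤ T) :
    2 * η ^ 2 * α ^ 2 * t ≤ 1 := by
  have hpos : 0 < η * √(2 * T) := one_div_pos.mp (hα.trans_le hαT)
  have hle : α * (η * √(2 * T)) ≤ 1 := (le_div_iff₀ hpos).mp hαT
  have hsq : (α * (η * √(2 * T))) ^ 2 = 2 * η ^ 2 * α ^ 2 * T := by
    rw [mul_pow, mul_pow, Real.sq_sqrt (by positivity)]; ring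
  calc 2 * η ^ 2 * α ^ 2 * t ≤ 2 * η ^ 2 * α ^ 2 * T := by gcongr
    _ = (α * (η * √(2 * T))) ^ 2 := hsq.symm
    _ ≤ 1 := pow_le_one₀ (by positivity) hle

theorem block_dynamics_norm_bound_general (d k d' : ℕ)
    (η α : ℝ) (hα : 0 < α) (T : ℕ) :
    (∀ t : ℕ, 1 ≤ t →
      ‖blockTraj d k (d' / k) η α t‖ ^ 2 ≤ 2 * η ^ 2 * α ^ 2 * (t : ℝ)) ∧
    (α ≤ 1 / (η * Real.sqrt (2 * (T : ℝ))) →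
      ∀ t ≤ T, ‖blockTraj d k (d' / k) η α t‖ ≤ 1) := by
  refine ⟨fun t _ => norm_blockTraj_sq_le d k (d' / k) η α t, fun hαT t ht => ?_⟩
  have hsq : ‖blockTraj d k (d' / k) η α t‖ ^ 2 ≤ 1 :=
    (norm_blockTraj_sq_le d k (d' / k) η α t).trans (two_mul_sq_mul_sq_mul_le_one_of_le_one_div hα hαT ht)
  exact (pow_le_one_iff_of_nonneg (norm_nonneg _) two_ne_zero).mp hsq

/-- Along the block dynamics, `‖w_t‖² ≤ 2η²α²·t` for every `t ≥ 1`.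
In particular, if `α ≤ 1/(η√(2T))` then every iterate `w_t` with `t ≤ T` lies in the closed
unit ball (so projected gradient descent performs no projections up to time `T`). -/
theorem block_dynamics_norm_bound (d k d' : ℕ) (hk : 1 ≤ k) (hd' : d' ≤ d) (hdvd : k ∣ d')
    (η α : ℝ) (hη : 0 < η) (hα : 0 < α) (T : ℕ) :
    (∀ t : ℕ, 1 ≤ t →
      ‖blockTraj d k (d' / k) η α t‖ ^ 2 ≤ 2 * η ^ 2 * α ^ 2 * (t : ℝ)) ∧
    (α ≤ 1 / (η * Real.sqrt (2 * (T : ℝ))) →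
      ∀ t ≤ T, ‖blockTraj d k (d' / k) η α t‖ ≤ 1) :=
  block_dynamics_norm_bound_general d k d' η α hα T
end

section
/- Consider the block dynamics with parameters d, k, d', η, α. For an integer 1 ≤ B ≤ d define X_t(B) = max{ Σ_{i∈A} w_t(i) : A ⊆ {1,…,d}, |A| = B }. Then for every B, the sequence t ↦ X_t(B) is nondecreasing in t. Consequently, for every t ≤ T and every subset A of size B, Σ_{i∈A} w_t(i) ≤ max{ Σ_{i∈A'} w_T(i) : |A'| = B }. -/
open scoped BigOperators

/-! Every iterate `w_t` is constant on each block of `k` coordinates. A step either adds a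
nonnegative vector, which can only increase every coordinate sum, or moves a mass `c` from the
block `I_{j+1}` to the block `I_j` while both carry the same value. In the latter case let `σ`
exchange the two blocks by translation: then `w_t ∘ σ = w_t`, so `w_t` is the average of `w_{t+1}`
and `w_{t+1} ∘ σ`, and for every `A` one of `A` and `σ A` has `w_{t+1}`-sum at least the
`w_t`-sum of `A`. -/

open Finset

section TopSum

variable {ι : Type*}

theorem exists_card_eq_sum_le_of_perm (σ : Equiv.Perm ι) {u w : ι → ℝ}
    (h : ∀ i, u i + u (σ i) = 2 * w i) (A : Finset ι) :
    ∃ A' : Finset ι, A'.card = A.card ∧ ∑ i ∈ A, w i ≤ ∑ i ∈ A', u i := by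
  have hsum : ∑ i ∈ A, u i + ∑ i ∈ A.map σ.toEmbedding, u i = 2 * ∑ i ∈ A, w i := by
    rw [sum_map, ← sum_add_distrib, mul_sum]
    exact sum_congr rfl fun i _ => h i
  by_cases hA : ∑ i ∈ A, w i ≤ ∑ i ∈ A, u i
  · exact ⟨A, rfl, hA⟩
  · exact ⟨A.map σ.toEmbedding, card_map _, by linarith⟩

/-- The paper's `X(B)`; it is `sSup ∅ = 0` when `ι` has fewer than `B` elements. -/
noncomputable def topSum (B : ℕ) (f : ι → ℝ) : ℝ :=
  sSup {x : ℝ | ∃ A : Finset ι, A.card = B ∧ x = ∑ i ∈ A, f i}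

variable [Fintype ι]

theorem bddAbove_sums_card_eq (B : ℕ) (f : ι → ℝ) :
    BddAbove {x : ℝ | ∃ A : Finset ι, A.card = B ∧ x = ∑ i ∈ A, f i} :=
  ((Set.finite_range fun A : Finset ι => ∑ i ∈ A, f i).subset
    (by rintro _ ⟨A, -, rfl⟩; exact ⟨A, rfl⟩)).bddAbove

theorem sum_le_topSum (f : ι → ℝ) (A : Finset ι) : ∑ i ∈ A, f i ≤ topSum A.card f :=
  le_csSup (bddAbove_sums_card_eq _ f) ⟨A, rfl, rfl⟩

theorem topSum_le_topSum (B : ℕ) {u v : ι → ℝ}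
    (h : ∀ A : Finset ι, ∃ A' : Finset ι, A'.card = A.card ∧ ∑ i ∈ A, u i ≤ ∑ i ∈ A', v i) :
    topSum B u ≤ topSum B v := by
  rcases Set.eq_empty_or_nonempty {x : ℝ | ∃ A : Finset ι, A.card = B ∧ x = ∑ i ∈ A, u i}
    with hu | hu
  · have hv : {x : ℝ | ∃ A : Finset ι, A.card = B ∧ x = ∑ i ∈ A, v i} = ∅ :=
      Set.eq_empty_of_forall_notMem fun _ ⟨A, hA, _⟩ =>
        Set.eq_empty_iff_forall_notMem.1 hu _ ⟨A, hA, rfl⟩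
    rw [topSum, topSum, hu, hv]
  · refine csSup_le hu ?_
    rintro _ ⟨A, rfl, rfl⟩
    obtain ⟨A', hA', hle⟩ := h A
    exact hle.trans (le_csSup (bddAbove_sums_card_eq _ v) ⟨A', hA', rfl⟩)

end TopSum

section Blocks

variable {d k : ℕ}

theorem mem_block_iff (hk : 0 < k) (j n : ℕ) : (j - 1) * k ≤ n ∧ n < j * k ↔ n / k + 1 = j := by
  rcases j with _ | m
  · simp
  · rw [Nat.add_sub_cancel, add_one_mul, add_left_inj, Nat.div_eq_iff hk]
    omega

theorem card_filter_le_val_and_val_lt {a b : ℕ} (hb : b ≤ d) :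
    #{i : Fin d | a ≤ (i : ℕ) ∧ (i : ℕ) < b} = b - a := by
  rw [← card_map Fin.valEmbedding, ← Nat.card_Ico]
  congr 1
  ext n
  simp only [mem_map, mem_filter, mem_univ, true_and, Fin.valEmbedding_apply, mem_Ico]
  exact ⟨by rintro ⟨i, hi, rfl⟩; exact hi, fun hn => ⟨⟨n, by omega⟩, hn, rfl⟩⟩

def blockwiseConst (d k : ℕ) : Submodule ℝ (EuclideanSpace ℝ (Fin d)) where
  carrier := {w | ∃ W : ℕ → ℝ, ∀ i : Fin d, w i = W ((i : ℕ) / k)}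
  add_mem' := by
    rintro _ _ ⟨W₁, h₁⟩ ⟨W₂, h₂⟩
    exact ⟨W₁ + W₂, fun i => by simp [h₁, h₂]⟩
  zero_mem' := ⟨0, fun _ => rfl⟩
  smul_mem' := by
    rintro c _ ⟨W, h⟩
    exact ⟨c • W, fun i => by simp [h]⟩

theorem blockVec_apply (hk : 0 < k) (j : ℕ) (i : Fin d) :
    blockVec d k j i = if (i : ℕ) / k + 1 = j then (Real.sqrt k)⁻¹ else 0 := by
  simp only [blockVec, PiLp.toLp_apply, mem_block_iff hk]

theorem blockVec_nonneg (j : ℕ) (i : Fin d) : 0 ≤ blockVec d k j i := by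
  simp only [blockVec, PiLp.toLp_apply]
  split_ifs <;> positivity

theorem blockVec_mem_blockwiseConst (hk : 0 < k) (j : ℕ) : blockVec d k j ∈ blockwiseConst d k :=
  ⟨fun n => if n + 1 = j then (Real.sqrt k)⁻¹ else 0, blockVec_apply hk j⟩

theorem blockVal_succ (hk : 0 < k) {m : ℕ} (hm : (m + 1) * k ≤ d) {w : EuclideanSpace ℝ (Fin d)}
    {W : ℕ → ℝ} (hW : ∀ i : Fin d, w i = W ((i : ℕ) / k)) :
    blockVal d k w (m + 1) = Real.sqrt k * W m := by
  have hblock : ∀ i ∈ ({i : Fin d | (m + 1 - 1) * k ≤ (i : ℕ) ∧ (i : ℕ) < (m + 1) * k} :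
      Finset (Fin d)), w i = W m := fun i hi => by
    rw [hW, add_left_injective 1 ((mem_block_iff hk (m + 1) i).1 (mem_filter.1 hi).2)]
  rw [blockVal, sum_congr rfl hblock, sum_const, card_filter_le_val_and_val_lt hm, nsmul_eq_mul,
    Nat.add_sub_cancel, add_one_mul, Nat.add_sub_cancel_left]
  have hpos : 0 < Real.sqrt k := Real.sqrt_pos.2 (by exact_mod_cast hk)
  field_simp
  rw [Real.sq_sqrt k.cast_nonneg]

theorem mul_add_mod_div (hk : 0 < k) (s n : ℕ) : (s * k + n % k) / k = s := by
  rw [add_comm, Nat.add_mul_div_right _ _ hk, Nat.div_eq_of_lt (Nat.mod_lt n hk), zero_add]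

theorem swap_div_mul_add_mod_lt (hk : 0 < k) {m : ℕ} (hm : (m + 2) * k ≤ d) {n : ℕ} (hn : n < d) :
    Equiv.swap m (m + 1) (n / k) * k + n % k < d := by
  have hr := Nat.mod_lt n hk
  have hn' := Nat.div_add_mod' n k
  rcases eq_or_ne (n / k) m with h | h
  · rw [h, Equiv.swap_apply_left]
    nlinarith
  rcases eq_or_ne (n / k) (m + 1) with h' | h'
  · rw [h', Equiv.swap_apply_right]
    nlinarith
  · rw [Equiv.swap_apply_of_ne_of_ne h h']
    omega

def blockSwap (hk : 0 < k) {m : ℕ} (hm : (m + 2) * k ≤ d) : Equiv.Perm (Fin d) :=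
  Function.Involutive.toPerm
    (fun i => ⟨Equiv.swap m (m + 1) (i / k) * k + i % k, swap_div_mul_add_mod_lt hk hm i.2⟩)
    fun i => by
      ext
      simp only [mul_add_mod_div hk, Nat.mul_add_mod', Nat.mod_mod, Equiv.swap_apply_self,
        Nat.div_add_mod']

theorem blockSwap_div (hk : 0 < k) {m : ℕ} (hm : (m + 2) * k ≤ d) (i : Fin d) :
    (blockSwap hk hm i : ℕ) / k = Equiv.swap m (m + 1) (i / k) :=
  mul_add_mod_div hk _ _

theorem exists_card_eq_sum_le_sum_sub_smul_blockVec (hk : 0 < k) {m : ℕ} (hm : (m + 2) * k ≤ d)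
    {w : EuclideanSpace ℝ (Fin d)} (hw : w ∈ blockwiseConst d k)
    (heq : blockVal d k w (m + 1) = blockVal d k w (m + 2)) (c : ℝ) (A : Finset (Fin d)) :
    ∃ A' : Finset (Fin d), A'.card = A.card ∧
      ∑ i ∈ A, w i ≤ ∑ i ∈ A', (w - c • (blockVec d k (m + 2) - blockVec d k (m + 1))) i := by
  obtain ⟨W, hW⟩ := hw
  have hWm : W m = W (m + 1) := by
    rw [blockVal_succ hk (le_trans (by nlinarith) hm) hW, blockVal_succ hk hm hW] at heq
    exact mul_left_cancel₀ (Real.sqrt_pos.2 (by exact_mod_cast hk)).ne' heq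
  refine exists_card_eq_sum_le_of_perm (blockSwap hk hm) (fun i => ?_) A
  simp only [PiLp.sub_apply, PiLp.smul_apply, smul_eq_mul, blockVec_apply hk, hW, blockSwap_div]
  generalize (i : ℕ) / k = n
  rcases eq_or_ne n m with rfl | h
  · simp [hWm, two_mul]
  rcases eq_or_ne n (m + 1) with rfl | h'
  · simp [hWm, two_mul]
  · simp [Equiv.swap_apply_of_ne_of_ne h h', h, h', two_mul]

end Blocks

section Dynamics

variable {d k D : ℕ} {η α : ℝ}

theorem blockStep_mem_blockwiseConst (hk : 0 < k) {w : EuclideanSpace ℝ (Fin d)}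
    (hw : w ∈ blockwiseConst d k) : blockStep d k D η α w ∈ blockwiseConst d k := by
  have he := blockVec_mem_blockwiseConst (d := d) hk
  unfold blockStep
  split_ifs
  · exact sub_mem hw (Submodule.smul_mem _ _ (Submodule.smul_mem _ _ (sub_mem (he _) (he _))))
  · exact sub_mem hw (Submodule.smul_mem _ _ (neg_mem (Submodule.smul_mem _ _ (he _))))
  · exact hw

theorem blockTraj_mem_blockwiseConst (hk : 0 < k) (t : ℕ) :
    blockTraj d k D η α t ∈ blockwiseConst d k := by
  induction t with
  | zero => exact zero_mem _
  | succ t ih => exact blockStep_mem_blockwiseConst hk ih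

theorem exists_card_eq_sum_le_sum_blockStep (hk : 0 < k) (hD : D * k ≤ d) (hηα : 0 ≤ η * α)
    {w : EuclideanSpace ℝ (Fin d)} (hw : w ∈ blockwiseConst d k) (A : Finset (Fin d)) :
    ∃ A' : Finset (Fin d), A'.card = A.card ∧
      ∑ i ∈ A, w i ≤ ∑ i ∈ A', blockStep d k D η α w i := by
  unfold blockStep
  split_ifs with h₁ h₂
  · obtain ⟨hj, hjD, heq, -⟩ := Nat.find_spec h₁
    obtain ⟨m, hm⟩ : ∃ m, Nat.find h₁ = m + 1 := ⟨_, (Nat.sub_add_cancel hj).symm⟩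
    rw [hm] at heq hjD ⊢
    rw [smul_smul]
    exact exists_card_eq_sum_le_sum_sub_smul_blockVec hk
      ((Nat.mul_le_mul_right k hjD).trans hD) hw heq _ A
  · refine ⟨A, rfl, sum_le_sum fun i _ => ?_⟩
    simp only [PiLp.sub_apply, PiLp.smul_apply, PiLp.neg_apply, smul_eq_mul]
    nlinarith [blockVec_nonneg (d := d) (k := k) (Nat.find h₂) i]
  · exact ⟨A, rfl, le_rfl⟩

end Dynamics

theorem block_dynamics_top_sum_monotone_general (d k d' : ℕ) (hk : 1 ≤ k) (hd' : d' ≤ d)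
    (η α : ℝ) (hη : 0 < η) (hα : 0 < α)
    (B : ℕ) :
    (∀ t : ℕ,
      sSup {x : ℝ | ∃ A : Finset (Fin d), A.card = B ∧
          x = ∑ i ∈ A, blockTraj d k (d' / k) η α t i} ≤
        sSup {x : ℝ | ∃ A : Finset (Fin d), A.card = B ∧
          x = ∑ i ∈ A, blockTraj d k (d' / k) η α (t + 1) i}) ∧
    (∀ t T : ℕ, t ≤ T → ∀ A : Finset (Fin d), A.card = B →
      ∑ i ∈ A, blockTraj d k (d' / k) η α t i ≤
        sSup {x : ℝ | ∃ A' : Finset (Fin d), A'.card = B ∧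
          x = ∑ i ∈ A', blockTraj d k (d' / k) η α T i}) := by
  have mono : Monotone fun t => topSum B (blockTraj d k (d' / k) η α t) :=
    monotone_nat_of_le_succ fun t => topSum_le_topSum B <|
      exists_card_eq_sum_le_sum_blockStep hk ((Nat.div_mul_le_self d' k).trans hd')
        (mul_pos hη hα).le (blockTraj_mem_blockwiseConst hk t)
  refine ⟨fun t => mono t.le_succ, fun t T hT A hA => ?_⟩
  subst hA
  exact (sum_le_topSum _ A).trans (mono hT)

/-- For `1 ≤ B ≤ d`, the quantity
`X_t(B) = max{∑_{i∈A} w_t(i) : A ⊆ [d], |A| = B}` is nondecreasing in `t` along the block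
dynamics; consequently for every `t ≤ T` and every `A` of size `B`,
`∑_{i∈A} w_t(i) ≤ max{∑_{i∈A'} w_T(i) : |A'| = B}`. -/
theorem block_dynamics_top_sum_monotone (d k d' : ℕ) (hk : 1 ≤ k) (hd' : d' ≤ d)
    (hdvd : k ∣ d') (η α : ℝ) (hη : 0 < η) (hα : 0 < α)
    (B : ℕ) (hB1 : 1 ≤ B) (hBd : B ≤ d) :
    (∀ t : ℕ,
      sSup {x : ℝ | ∃ A : Finset (Fin d), A.card = B ∧
          x = ∑ i ∈ A, blockTraj d k (d' / k) η α t i} ≤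
        sSup {x : ℝ | ∃ A : Finset (Fin d), A.card = B ∧
          x = ∑ i ∈ A, blockTraj d k (d' / k) η α (t + 1) i}) ∧
    (∀ t T : ℕ, t ≤ T → ∀ A : Finset (Fin d), A.card = B →
      ∑ i ∈ A, blockTraj d k (d' / k) η α t i ≤
        sSup {x : ℝ | ∃ A' : Finset (Fin d), A'.card = B ∧
          x = ∑ i ∈ A', blockTraj d k (d' / k) η α T i}) :=
  block_dynamics_top_sum_monotone_general d k d' hk hd' η α hη hα B
end
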